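/- arXiv:1203.0090 — 3 statements merged into one kernel-verified Lean document; each statement's English description precedes it below -/
import Mathlib

section
/- Let M be a matroid with finite ground set E, let X \subseteq E be a circuit-hyperplane of M, and let M' be the relaxation of M at X (the matroid whose bases are the bases of M together with X). Then T_{M'}(x,y) = T_M(x,y) - xy + x + y. -/
/-!
Relaxation adds the single independent set `Z`, so the rank function changes only at `Z`.
A set not containing `Z` has the same independent subsets in both matroids, and a proper
superset `A` of `Z` already has full rank in `M`: for `z ∈ Z` the set `Z \ {z}` is independent
with closure inside the flat `Z`, so adding any point of `A \ Z` gives an independent set of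
size `|Z| = r(M)`. Only the summand of `Z` changes, from `(x-1)(y-1)` to `1`.
-/

open MvPolynomial Finset
open scoped Matroid

namespace TuttePaper

open Classical

variable {α : Type*}

/-- The rank of a set in a matroid: the maximum cardinality of an independent subset. -/
noncomputable def rk (M : Matroid α) (A : Set α) : ℕ :=
  sSup {n | ∃ I, M.Indep I ∧ I ⊆ A ∧ I.ncard = n}

/-- The Tutte polynomial of a matroid with finite ground set, as an element of ℤ[x,y];
the variable `X 0` plays the role of `x` and `X 1` that of `y`:
`T_M(x,y) = ∑_{A ⊆ E} (x-1)^(r(E)-r(A)) (y-1)^(|A|-r(A))`. -/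
noncomputable def tutte (M : Matroid α) : MvPolynomial (Fin 2) ℤ :=
  if hE : M.E.Finite then
    ∑ A ∈ hE.toFinset.powerset,
      (X 0 - 1) ^ (rk M M.E - rk M ↑A) * (X 1 - 1) ^ (A.card - rk M ↑A)
  else 0

/-- The Tutte polynomial with `x` evaluated at `1`, i.e. `T_M(1,y)`, as an element of ℤ[x,y]. -/
noncomputable def tutteX1 (M : Matroid α) : MvPolynomial (Fin 2) ℤ :=
  eval₂ C (fun i => if i = 0 then 1 else X 1) (tutte M)

/-- A loop of a matroid: an element whose singleton has rank zero. -/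
def IsLoop (M : Matroid α) (e : α) : Prop := rk M {e} = 0

/-- A coloop of a matroid: an element contained in every basis. -/
def IsColoop (M : Matroid α) (e : α) : Prop := ∀ B, M.IsBase B → e ∈ B

/-- A circuit of a matroid: a minimal dependent set. -/
def IsCircuit (M : Matroid α) (C : Set α) : Prop :=
  C ⊆ M.E ∧ ¬ M.Indep C ∧ ∀ D ⊂ C, M.Indep D

/-- A hyperplane of a matroid: a flat of rank `r(M) - 1`. -/
def IsHyperplane (M : Matroid α) (H : Set α) : Prop :=
  M.IsFlat H ∧ rk M H + 1 = rk M M.E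

/-- Deletion of a set of elements from a matroid. -/
def deleteSet (M : Matroid α) (D : Set α) : Matroid α := M ↾ (M.E \ D)

/-- Contraction of a set of elements in a matroid, `M/C = (M✶ \ C)✶`. -/
def contractSet (M : Matroid α) (C : Set α) : Matroid α := ((M✶) ↾ (M.E \ C))✶

/-- Deletion of a single element. -/
def deleteElem (M : Matroid α) (e : α) : Matroid α := deleteSet M {e}

/-- Contraction of a single element. -/
def contractElem (M : Matroid α) (e : α) : Matroid α := contractSet M {e}

/-- A matroid is paving if every circuit has size at least the rank of the matroid. -/
def Paving (M : Matroid α) : Prop := ∀ C, IsCircuit M C → rk M M.E ≤ C.ncard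

/-- A matroid is sparse paving if it is paving and any two distinct circuits of size `r(M)`
have symmetric difference of size greater than two. -/
def SparsePaving (M : Matroid α) : Prop :=
  Paving M ∧ ∀ C₁ C₂, IsCircuit M C₁ → IsCircuit M C₂ →
    C₁.ncard = rk M M.E → C₂.ncard = rk M M.E → C₁ ≠ C₂ → 2 < (symmDiff C₁ C₂).ncard

/-- An `m`-partition of a set `E`: a collection of at least two subsets of `E`, each with at
least `m` elements, such that every `m`-element subset of `E` is contained in exactly one
member of the collection. -/
def IsMPartition (m : ℕ) (E : Set α) (T : Set (Set α)) : Prop :=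
  1 < T.ncard ∧ (∀ B ∈ T, B ⊆ E ∧ m ≤ B.ncard) ∧
    ∀ S ⊆ E, S.ncard = m → ∃! B, B ∈ T ∧ S ⊆ B

/-- `tcoef M i j` is the coefficient `t_{ij}` of `x^i y^j` in the Tutte polynomial of `M`. -/
noncomputable def tcoef (M : Matroid α) (i j : ℕ) : ℤ :=
  MvPolynomial.coeff (Finsupp.single (0 : Fin 2) i + Finsupp.single (1 : Fin 2) j) (tutte M)

/-- The characteristic polynomial `χ_N(λ) = ∑_{A ⊆ E} (-1)^{|A|} λ^{r(E)-r(A)}` of a matroid,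
evaluated at an element `l` of a commutative ring. -/
noncomputable def charEval {R : Type*} [CommRing R] (N : Matroid α) (l : R) : R :=
  if hE : N.E.Finite then
    ∑ A ∈ hE.toFinset.powerset, (-1 : R) ^ A.card * l ^ (rk N N.E - rk N ↑A)
  else 0

/-- Crapo's coboundary polynomial `χ̄_M(λ,t) = ∑_{X flat of M} t^{|X|} χ_{M/X}(λ)`,
evaluated at elements `l`, `t` of a commutative ring. -/
noncomputable def cobEval {R : Type*} [CommRing R] (M : Matroid α) (l t : R) : R :=
  if hE : M.E.Finite then
    (hE.toFinset.powerset.filter (fun F : Finset α => M.IsFlat ↑F)).sum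
      (fun F => t ^ F.card * charEval (contractSet M ↑F) l)
  else 0

lemma rk_le_of_forall_indep {M : Matroid α} {A : Set α} {n : ℕ}
    (h : ∀ I, M.Indep I → I ⊆ A → I.ncard ≤ n) : rk M A ≤ n :=
  csSup_le ⟨0, ∅, M.empty_indep, Set.empty_subset A, Set.ncard_empty α⟩ <| by
    rintro m ⟨I, hI, hIA, rfl⟩
    exact h I hI hIA

lemma ncard_le_rk {M : Matroid α} {A I : Set α} (hA : A.Finite) (hI : M.Indep I)
    (hIA : I ⊆ A) : I.ncard ≤ rk M A := by
  refine le_csSup ⟨A.ncard, ?_⟩ ⟨I, hI, hIA, rfl⟩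
  rintro m ⟨J, -, hJA, rfl⟩
  exact Set.ncard_le_ncard hJA hA

lemma IsCircuit.rk_add_one {M : Matroid α} {C : Set α} (hC : IsCircuit M C) (hfin : C.Finite) :
    rk M C + 1 = C.ncard := by
  obtain ⟨-, hdep, hssub⟩ := hC
  obtain ⟨e, he⟩ : C.Nonempty :=
    Set.nonempty_iff_ne_empty.2 fun h => hdep (h ▸ M.empty_indep)
  have hlower : (C \ {e}).ncard ≤ rk M C :=
    ncard_le_rk hfin (hssub _ (Set.sdiff_singleton_ssubset.2 he)) Set.sdiff_subset
  have hupper : rk M C ≤ C.ncard - 1 :=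
    rk_le_of_forall_indep fun I hI hIC => Nat.le_sub_one_of_lt <|
      Set.ncard_lt_ncard (hIC.ssubset_of_ne fun h => hdep (by rwa [h] at hI)) hfin
  have hsplit := Set.ncard_sdiff_singleton_add_one he hfin
  omega

lemma IsCircuit.ncard_le_rk_of_ssubset {M : Matroid α} {C A : Set α} (hC : IsCircuit M C)
    (hF : M.IsFlat C) (hCA : C ⊂ A) (hA : A ⊆ M.E) (hfin : A.Finite) : C.ncard ≤ rk M A := by
  obtain ⟨-, hdep, hssub⟩ := hC
  obtain ⟨e, he⟩ : C.Nonempty :=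
    Set.nonempty_iff_ne_empty.2 fun h => hdep (h ▸ M.empty_indep)
  obtain ⟨f, hfA, hfC⟩ := Set.exists_of_ssubset hCA
  have hI : M.Indep (C \ {e}) := hssub _ (Set.sdiff_singleton_ssubset.2 he)
  have hfI : f ∉ C \ {e} := fun h => hfC h.1
  have hins : M.Indep (insert f (C \ {e})) := by
    refine (hI.insert_indep_iff_of_notMem hfI).2 ⟨hA hfA, fun hcl => hfC ?_⟩
    exact hF.closure ▸ M.closure_subset_closure Set.sdiff_subset hcl
  have hcard : (insert f (C \ {e})).ncard = C.ncard := by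
    rw [Set.ncard_insert_of_notMem hfI ((hfin.subset hCA.subset).sdiff),
      Set.ncard_sdiff_singleton_add_one he (hfin.subset hCA.subset)]
  exact hcard ▸ ncard_le_rk hfin hins
    (Set.insert_subset hfA (Set.sdiff_subset.trans hCA.subset))

lemma indep_iff_of_isBase_iff {M M' : Matroid α} {Z : Set α} (hZ : ∀ D ⊂ Z, M.Indep D)
    (hB : ∀ B, M'.IsBase B ↔ M.IsBase B ∨ B = Z) (I : Set α) :
    M'.Indep I ↔ M.Indep I ∨ I = Z := by
  rw [Matroid.indep_iff]
  simp_rw [hB]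
  constructor
  · rintro ⟨B, hB' | rfl, hIB⟩
    · exact Or.inl (hB'.indep.subset hIB)
    · exact hIB.ssubset_or_eq.imp_left (hZ I)
  · rintro (hI | rfl)
    · obtain ⟨B, hB', hIB⟩ := Matroid.indep_iff.1 hI
      exact ⟨B, Or.inl hB', hIB⟩
    · exact ⟨I, Or.inr rfl, subset_rfl⟩

lemma rk_eq_of_not_subset {M M' : Matroid α} {Z A : Set α}
    (h : ∀ I, M'.Indep I ↔ M.Indep I ∨ I = Z) (hZA : ¬ Z ⊆ A) : rk M' A = rk M A := by
  unfold rk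
  congr 1
  ext m
  refine exists_congr fun I => and_congr_left fun hIA => ?_
  rw [h, or_iff_left]
  rintro rfl
  exact hZA hIA.1

lemma rk_eq_max_of_subset {M M' : Matroid α} {Z A : Set α}
    (h : ∀ I, M'.Indep I ↔ M.Indep I ∨ I = Z) (hA : A.Finite) (hZA : Z ⊆ A) :
    rk M' A = max (rk M A) Z.ncard := by
  refine le_antisymm (rk_le_of_forall_indep fun I hI hIA => ?_) (max_le ?_ ?_)
  · rcases (h I).1 hI with hI | rfl
    · exact le_max_of_le_left (ncard_le_rk hA hI hIA)
    · exact le_max_right _ _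
  · exact rk_le_of_forall_indep fun I hI hIA => ncard_le_rk hA ((h I).2 (Or.inl hI)) hIA
  · exact ncard_le_rk hA ((h Z).2 (Or.inr rfl)) hZA

noncomputable def tutteTerm (M : Matroid α) (A : Set α) : MvPolynomial (Fin 2) ℤ :=
  (X 0 - 1) ^ (rk M M.E - rk M A) * (X 1 - 1) ^ (A.ncard - rk M A)

lemma tutte_eq_sum_tutteTerm {M : Matroid α} (hE : M.E.Finite) :
    tutte M = ∑ A ∈ hE.toFinset.powerset, tutteTerm M A := by
  simp only [tutte, dif_pos hE, tutteTerm, Set.ncard_coe_finset]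

lemma tutte_eq_of_rk_eq_of_ne {M M' : Matroid α} {Z : Set α} (hE : M.E.Finite)
    (hE' : M'.E = M.E) (hZ : Z ⊂ M.E) (hrk : ∀ A ⊆ M.E, A ≠ Z → rk M' A = rk M A) :
    tutte M' = tutte M - tutteTerm M Z + tutteTerm M' Z := by
  have hE'fin : M'.E.Finite := hE' ▸ hE
  have hfs : hE'fin.toFinset = hE.toFinset := by simp only [hE']
  have hrkE : rk M' M'.E = rk M M.E := hE' ▸ hrk M.E subset_rfl hZ.ne'
  set Zf := (hE.subset hZ.subset).toFinset
  have hZf : (Zf : Set α) = Z := Set.Finite.coe_toFinset _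
  have hZmem : Zf ∈ hE.toFinset.powerset := by simpa [Zf] using hZ.subset
  have hterm : ∀ A ∈ hE.toFinset.powerset.erase Zf, tutteTerm M' A = tutteTerm M A := by
    intro A hA
    have hAE : (A : Set α) ⊆ M.E := by simpa using (Finset.mem_erase.1 hA).2
    have hAZ : (A : Set α) ≠ Z := hZf ▸ Finset.coe_injective.ne (Finset.mem_erase.1 hA).1
    simp only [tutteTerm, hrkE, hrk A hAE hAZ]
  rw [tutte_eq_sum_tutteTerm hE'fin, tutte_eq_sum_tutteTerm hE, hfs,
    ← Finset.sum_erase_add _ _ hZmem, ← Finset.sum_erase_add _ _ hZmem,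
    Finset.sum_congr rfl hterm, hZf]
  ring

/-- the Tutte polynomial of the relaxation `M'` of `M` at a circuit-hyperplane
`Z` satisfies `T_{M'}(x,y) = T_M(x,y) - xy + x + y`. -/
theorem tutte_relaxation (M M' : Matroid α) (hE : M.E.Finite) (Z : Set α)
    (hC : IsCircuit M Z) (hH : IsHyperplane M Z)
    (hE' : M'.E = M.E) (hB : ∀ B, M'.IsBase B ↔ (M.IsBase B ∨ B = Z)) :
    tutte M' = tutte M - X 0 * X 1 + X 0 + X 1 := by
  have hInd := indep_iff_of_isBase_iff hC.2.2 hB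
  have hZfin : Z.Finite := hE.subset hC.1
  have hrkZ : rk M Z + 1 = Z.ncard := hC.rk_add_one hZfin
  have hZcard : Z.ncard = rk M M.E := hrkZ.symm.trans hH.2
  have hZE : Z ⊂ M.E := hC.1.ssubset_of_ne fun h => by rw [h] at hrkZ hZcard; omega
  have hrk : ∀ A ⊆ M.E, A ≠ Z → rk M' A = rk M A := by
    intro A hA hAZ
    by_cases hZA : Z ⊆ A
    · rw [rk_eq_max_of_subset hInd (hE.subset hA) hZA, max_eq_left]
      exact hC.ncard_le_rk_of_ssubset hH.1 (hZA.ssubset_of_ne hAZ.symm) hA (hE.subset hA)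
    · exact rk_eq_of_not_subset hInd hZA
  have hrk'Z : rk M' Z = Z.ncard := by
    rw [rk_eq_max_of_subset hInd hZfin subset_rfl, max_eq_right (by omega)]
  have hrk'E : rk M' M'.E = rk M M.E := hE' ▸ hrk M.E subset_rfl hZE.ne'
  have htermM : tutteTerm M Z = (X 0 - 1) * (X 1 - 1) := by
    rw [tutteTerm, show rk M M.E - rk M Z = 1 by omega, show Z.ncard - rk M Z = 1 by omega,
      pow_one, pow_one]
  have htermM' : tutteTerm M' Z = 1 := by
    rw [tutteTerm, hrk'E, hrk'Z, ← hZcard, Nat.sub_self, pow_zero, pow_zero, one_mul]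
  rw [tutte_eq_of_rk_eq_of_ne hE hE' hZE hrk, htermM, htermM']
  ring

end TuttePaper
end

section
/- Let M be a sparse paving matroid of rank r with n elements and exactly \lambda circuit-hyperplanes. Then T_M(x,y) = \sum_{i=0}^{r-1} \binom{n}{i}(x-1)^{r-i} + \binom{n}{r} + \lambda (xy - x - y) + \sum_{i=r+1}^{n} \binom{n}{i}(y-1)^{i-r}. -/
/-!
In a sparse paving matroid of rank `r`, sets of size `< r` are independent and sets of size
`> r` have rank `r`, while the dependent `r`-sets are exactly the circuit-hyperplanes and have
rank `r - 1`. The sparse paving condition enters through one observation: if `I` is independent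
of size `r - 1`, then at most one `e ∉ I` makes `insert e I` dependent, because two such circuits
differ in just two elements. So every subset contributes to the Tutte sum the term it contributes
for the uniform matroid `U_{r,n}`, except that each circuit-hyperplane contributes
`(x - 1)(y - 1) = 1 + (xy - x - y)` instead of `1`.
-/

open MvPolynomial Finset
open scoped Matroid

namespace TuttePaper

open Classical

variable {α : Type*}

variable {M : Matroid α} {A C I : Set α} {e f : α}

lemma sum_range_choose_mul_pow_tsub_mul_pow_tsub {R : Type*} [CommRing R] (a b : R) {r n : ℕ}
    (hrn : r ≤ n) :
    ∑ i ∈ range (n + 1), (n.choose i : R) * (a ^ (r - i) * b ^ (i - r)) =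
      ∑ i ∈ range r, (n.choose i : R) * a ^ (r - i) + n.choose r
        + ∑ i ∈ Icc (r + 1) n, (n.choose i : R) * b ^ (i - r) := by
  rw [← sum_range_add_sum_Ico _ (by omega : r ≤ n + 1),
    sum_eq_sum_Ico_succ_bot (by omega : r < n + 1), Ico_add_one_right_eq_Icc]
  have hlow : ∀ i ∈ range r, (n.choose i : R) * (a ^ (r - i) * b ^ (i - r)) =
      n.choose i * a ^ (r - i) := fun i hi => by
    rw [Nat.sub_eq_zero_of_le (mem_range.1 hi).le, pow_zero, mul_one]
  have hhigh : ∀ i ∈ Icc (r + 1) n, (n.choose i : R) * (a ^ (r - i) * b ^ (i - r)) =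
      n.choose i * b ^ (i - r) := fun i hi => by
    rw [Nat.sub_eq_zero_of_le (by linarith [(mem_Icc.1 hi).1]), pow_zero, one_mul]
  rw [sum_congr rfl hlow, sum_congr rfl hhigh, Nat.sub_self, pow_zero, pow_zero, mul_one,
    mul_one, add_assoc]

lemma ncard_setOf_eq_card_filter_powerset {E : Set α} (hE : E.Finite) {P : Set α → Prop}
    (hP : ∀ A, P A → A ⊆ E) :
    {A | P A}.ncard = #(hE.toFinset.powerset.filter fun A : Finset α => P ↑A) := by
  have : {A | P A} = (fun F : Finset α => (F : Set α)) ''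
      ↑(hE.toFinset.powerset.filter fun A : Finset α => P ↑A) := by
    ext A
    simp only [Set.mem_ofPred_eq, coe_filter, mem_powerset, Set.mem_image]
    refine ⟨fun h => ⟨(hE.subset (hP A h)).toFinset, ?_, Set.Finite.coe_toFinset _⟩, ?_⟩
    · simpa [Set.Finite.toFinset_subset_toFinset.2 (hP A h)]
    · rintro ⟨F, hF, rfl⟩
      exact hF.2
  rw [this, Set.ncard_image_of_injective _ Finset.coe_injective, Set.ncard_coe_finset]

section Rank

variable [M.RankFinite]

lemma rk_eq_toNat_eRk (A : Set α) : rk M A = (M.eRk A).toNat := by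
  obtain ⟨I, hI⟩ := M.exists_isBasis' A
  refine IsGreatest.csSup_eq
    ⟨⟨I, hI.indep, hI.subset, by rw [Set.ncard_def, hI.encard_eq_eRk]⟩, ?_⟩
  rintro n ⟨J, hJ, hJA, rfl⟩
  exact ENat.toNat_le_toNat (hJ.encard_le_eRk_of_subset hJA) (M.isRkFinite_set A).eRk_lt_top.ne

lemma natCast_rk (A : Set α) : (rk M A : ℕ∞) = M.eRk A := by
  rw [rk_eq_toNat_eRk, ENat.natCast_toNat (M.isRkFinite_set A).eRk_lt_top.ne]

lemma rk_eq_ncard_of_indep (hI : M.Indep I) : rk M I = I.ncard := by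
  rw [rk_eq_toNat_eRk, hI.eRk_eq_encard, Set.ncard_def]

lemma ncard_le_rk_of_indep (hI : M.Indep I) (hIA : I ⊆ A) : I.ncard ≤ rk M A := by
  rw [← rk_eq_ncard_of_indep hI]
  exact_mod_cast (natCast_rk I).trans_le ((M.eRk_mono hIA).trans (natCast_rk A).ge)

lemma ncard_eq_rk_of_isBasis (hI : M.IsBasis I A) : I.ncard = rk M A := by
  rw [rk_eq_toNat_eRk, ← hI.encard_eq_eRk, Set.ncard_def]

lemma rk_mono {B : Set α} (hAB : A ⊆ B) : rk M A ≤ rk M B := by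
  exact_mod_cast (natCast_rk A).trans_le ((M.eRk_mono hAB).trans (natCast_rk B).ge)

lemma rk_le_ncard (hA : A.Finite) : rk M A ≤ A.ncard := by
  exact_mod_cast (natCast_rk A).trans_le ((M.eRk_le_encard A).trans hA.cast_ncard_eq.ge)

lemma rk_add_one_eq_ncard_of_isCircuit (hC : M.IsCircuit C) : rk M C + 1 = C.ncard := by
  exact_mod_cast (natCast_rk (M := M) C ▸ hC.eRk_add_one_eq).trans hC.finite.cast_ncard_eq.symm

end Rank

lemma isCircuit_iff_isCircuit : IsCircuit M C ↔ M.IsCircuit C := by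
  rw [Matroid.isCircuit_iff_forall_ssubset, Matroid.dep_iff, IsCircuit]
  tauto

section Paving

variable [M.Finite]

lemma Paving.indep_of_ncard_lt (hp : Paving M) (hA : A ⊆ M.E) (h : A.ncard < rk M M.E) :
    M.Indep A := by
  by_contra hdep
  obtain ⟨C, hCA, hC⟩ := ((M.not_indep_iff hA).1 hdep).exists_isCircuit_subset
  have := hp C (isCircuit_iff_isCircuit.2 hC)
  have := Set.ncard_le_ncard hCA (M.set_finite A)
  omega

lemma Paving.isCircuit_of_dep (hp : Paving M) (hA : M.Dep A) (h : A.ncard ≤ rk M M.E) :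
    M.IsCircuit A := by
  obtain ⟨C, hCA, hC⟩ := hA.exists_isCircuit_subset
  rwa [← Set.eq_of_subset_of_ncard_le hCA (h.trans (hp C (isCircuit_iff_isCircuit.2 hC)))
    (M.set_finite A hA.subset_ground)]

lemma SparsePaving.eq_of_dep_insert (hsp : SparsePaving M) (hI : M.Indep I)
    (hIr : I.ncard + 1 = rk M M.E) (heI : e ∉ I) (hfI : f ∉ I) (he : M.Dep (insert e I))
    (hf : M.Dep (insert f I)) : e = f := by
  have hcard : ∀ x ∉ I, (insert x I).ncard = rk M M.E := fun x hx => by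
    rw [Set.ncard_insert_of_notMem hx hI.finite, hIr]
  by_contra hne
  have hsd : symmDiff (insert e I) (insert f I) ⊆ {e, f} := by
    intro x
    simp only [Set.mem_symmDiff, Set.mem_insert_iff, Set.mem_singleton_iff]
    tauto
  have hlt := hsp.2 _ _ (isCircuit_iff_isCircuit.2 (hsp.1.isCircuit_of_dep he (hcard e heI).le))
    (isCircuit_iff_isCircuit.2 (hsp.1.isCircuit_of_dep hf (hcard f hfI).le))
    (hcard e heI) (hcard f hfI)
    fun h => hne (((h ▸ Set.mem_insert e I) : e ∈ insert f I).resolve_right heI)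
  have := Set.ncard_le_ncard hsd (Set.toFinite _)
  rw [Set.ncard_pair hne] at this
  omega

lemma SparsePaving.rk_eq_of_rk_lt_ncard (hsp : SparsePaving M) (hA : A ⊆ M.E)
    (h : rk M M.E < A.ncard) : rk M A = rk M M.E := by
  refine (rk_mono hA).antisymm (not_lt.1 fun hlt => ?_)
  obtain ⟨J, hJA, hJ⟩ := Set.exists_subset_card_eq (show rk M M.E - 1 ≤ A.ncard by omega)
  have hJr : rk M M.E - 1 ≤ rk M A :=
    hJ ▸ ncard_le_rk_of_indep (hsp.1.indep_of_ncard_lt (hJA.trans hA) (by omega)) hJA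
  obtain ⟨I, hI⟩ := M.exists_isBasis A
  have hIr := ncard_eq_rk_of_isBasis hI
  have : 1 < (A \ I).ncard := by
    rw [Set.ncard_sdiff hI.subset hI.indep.finite]
    omega
  obtain ⟨e, f, he, hf, hne⟩ := (Set.one_lt_ncard_iff ((M.set_finite A).sdiff)).1 this
  exact hne (hsp.eq_of_dep_insert hI.indep (by omega) he.2 hf.2 (hI.insert_dep he)
    (hI.insert_dep hf))

lemma SparsePaving.isFlat_of_isCircuit (hsp : SparsePaving M) (hC : M.IsCircuit C)
    (h : C.ncard = rk M M.E) : M.IsFlat C := by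
  obtain ⟨x, hx⟩ := hC.nonempty
  have hI := hC.sdiff_singleton_indep hx
  rw [Matroid.isFlat_iff_closure_eq]
  refine (M.subset_closure C hC.subset_ground).antisymm' fun e he => by_contra fun heC => ?_
  have heI : e ∉ C \ {x} := fun h => heC h.1
  have hcl : e ∈ M.closure (C \ {x}) := (hC.closure_sdiff_singleton_eq x).symm ▸ he
  have hxC : M.Dep (insert x (C \ {x})) := by
    rw [Set.insert_sdiff_singleton, Set.insert_eq_of_mem hx]
    exact hC.dep
  have := hsp.eq_of_dep_insert hI (by rw [Set.ncard_sdiff_singleton_add_one hx hC.finite, h])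
    heI (fun h => h.2 rfl) (hI.insert_dep_iff.2 ⟨hcl, heI⟩) hxC
  exact heC (this ▸ hx)

lemma SparsePaving.isCircuit_and_isHyperplane_iff (hsp : SparsePaving M) :
    IsCircuit M A ∧ IsHyperplane M A ↔ M.Dep A ∧ A.ncard = rk M M.E := by
  rw [isCircuit_iff_isCircuit]
  constructor
  · rintro ⟨hC, -, hH⟩
    exact ⟨hC.dep, by have := rk_add_one_eq_ncard_of_isCircuit hC; omega⟩
  · rintro ⟨hA, hAr⟩
    have hC := hsp.1.isCircuit_of_dep hA hAr.le
    have := rk_add_one_eq_ncard_of_isCircuit hC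
    exact ⟨hC, hsp.isFlat_of_isCircuit hC hAr, by omega⟩

lemma SparsePaving.pow_mul_pow_rk_eq {R : Type*} [CommRing R] (hsp : SparsePaving M)
    (hA : A ⊆ M.E) (a b : R) :
    a ^ (rk M M.E - rk M A) * b ^ (A.ncard - rk M A) =
      a ^ (rk M M.E - A.ncard) * b ^ (A.ncard - rk M M.E)
        + if M.Dep A ∧ A.ncard = rk M M.E then a * b - 1 else 0 := by
  obtain hlt | heq | hgt := lt_trichotomy A.ncard (rk M M.E)
  · rw [rk_eq_ncard_of_indep (hsp.1.indep_of_ncard_lt hA hlt), if_neg fun h => hlt.ne h.2,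
      Nat.sub_eq_zero_of_le hlt.le]
    simp
  · by_cases hdep : M.Dep A
    · have := rk_add_one_eq_ncard_of_isCircuit (hsp.1.isCircuit_of_dep hdep heq.le)
      rw [if_pos ⟨hdep, heq⟩, show rk M M.E - rk M A = 1 by omega,
        show A.ncard - rk M A = 1 by omega, heq]
      simp
    · rw [rk_eq_ncard_of_indep ((M.not_dep_iff hA).1 hdep), if_neg fun h => hdep h.1, heq]
      simp
  · rw [hsp.rk_eq_of_rk_lt_ncard hA hgt, if_neg fun h => hgt.ne' h.2,
      Nat.sub_eq_zero_of_le hgt.le]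
    simp

end Paving

lemma SparsePaving.ncard_isCircuit_and_isHyperplane (hsp : SparsePaving M) (hE : M.E.Finite) :
    {C : Set α | IsCircuit M C ∧ IsHyperplane M C}.ncard =
      #(hE.toFinset.powerset.filter fun A : Finset α => M.Dep ↑A ∧ #A = rk M M.E) := by
  have : M.Finite := ⟨hE⟩
  rw [ncard_setOf_eq_card_filter_powerset hE fun A h => h.1.1]
  simp only [hsp.isCircuit_and_isHyperplane_iff, Set.ncard_coe_finset]

lemma SparsePaving.tutte_eq (hsp : SparsePaving M) (hE : M.E.Finite) :
    tutte M = ∑ A ∈ hE.toFinset.powerset,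
        (X 0 - 1 : MvPolynomial (Fin 2) ℤ) ^ (rk M M.E - #A) * (X 1 - 1) ^ (#A - rk M M.E)
      + (#(hE.toFinset.powerset.filter fun A : Finset α => M.Dep ↑A ∧ #A = rk M M.E) :
          MvPolynomial (Fin 2) ℤ) * ((X 0 - 1) * (X 1 - 1) - 1) := by
  have : M.Finite := ⟨hE⟩
  rw [tutte, dif_pos hE, sum_congr rfl fun A hA => by
    rw [← Set.ncard_coe_finset A, hsp.pow_mul_pow_rk_eq (by simpa using hA)]]
  simp only [Set.ncard_coe_finset]
  rw [sum_add_distrib, sum_ite, sum_const_zero, add_zero, sum_const, nsmul_eq_mul]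

/-- the Tutte polynomial of a rank-`r` sparse paving matroid with `n` elements
and exactly `lam` circuit-hyperplanes. -/
theorem tutte_sparsePaving (M : Matroid α) (hE : M.E.Finite) (r n lam : ℕ)
    (hr : rk M M.E = r) (hn : M.E.ncard = n) (hsp : SparsePaving M)
    (hlam : {C : Set α | IsCircuit M C ∧ IsHyperplane M C}.ncard = lam) :
    tutte M = (∑ i ∈ range r, (n.choose i : MvPolynomial (Fin 2) ℤ) * (X 0 - 1) ^ (r - i))
      + (n.choose r : MvPolynomial (Fin 2) ℤ)
      + (lam : MvPolynomial (Fin 2) ℤ) * (X 0 * X 1 - X 0 - X 1)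
      + ∑ i ∈ Icc (r + 1) n, (n.choose i : MvPolynomial (Fin 2) ℤ) * (X 1 - 1) ^ (i - r) := by
  have : M.Finite := ⟨hE⟩
  subst hr hn hlam
  rw [hsp.tutte_eq hE, hsp.ncard_isCircuit_and_isHyperplane hE,
    sum_powerset_apply_card fun i => (X 0 - 1 : MvPolynomial (Fin 2) ℤ) ^ (rk M M.E - i)
      * (X 1 - 1) ^ (i - rk M M.E), ← Set.ncard_eq_toFinset_card _ hE]
  simp only [nsmul_eq_mul]
  rw [sum_range_choose_mul_pow_tsub_mul_pow_tsub _ _ (rk_le_ncard hE)]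
  ring

end TuttePaper
end

section
/- For integers 0 < r < n, the Tutte polynomial of the uniform matroid U_{r,n} equals \sum_{j=1}^{n-r} \binom{n-j-1}{r-1} y^j + \sum_{i=1}^{r} \binom{n-i-1}{n-r-1} x^i. -/
/-! In `U_{r,n}` a set `A` has rank `min |A| r`, so grouping the subsets by size gives
`T = ∑_{k ≤ r} C(n,k) (x-1)^(r-k) + ∑_{k ≥ r} C(n,k) (y-1)^(k-r) - C(n,r)`.
Each of the two tails, as a polynomial in `x` (resp. `y`), satisfies `g_{t+1} = x g_t + C(s+t+1, s)`
by Pascal's rule (with `n = s + t + 1`), and so does the hockey-stick sum `∑_i C(s+t-i, s) x^i`;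
both start at `1`, hence they agree. -/

open MvPolynomial Finset
open scoped Matroid

namespace TuttePaper

open Classical

variable {α : Type*}

section Binomial

variable {R : Type*} [CommRing R]

lemma sum_range_choose_mul_pow_succ (z : R) (s t : ℕ) :
    ∑ j ∈ range (t + 2), ((s + (t + 1) + 1).choose (s + 1 + j) : R) * z ^ j =
      (z + 1) * ∑ j ∈ range (t + 1), ((s + t + 1).choose (s + 1 + j) : R) * z ^ j +
        ((s + t + 1).choose s : R) := by
  have pascal : ∀ j, ((s + (t + 1) + 1).choose (s + 1 + j) : R) =
      ((s + t + 1).choose (s + j) : R) + ((s + t + 1).choose (s + 1 + j) : R) := fun j => by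
    rw [show s + (t + 1) + 1 = s + t + 1 + 1 by ring, show s + 1 + j = s + j + 1 by ring,
      Nat.choose_succ_succ', Nat.cast_add]
  have top : ((s + t + 1).choose (s + 1 + (t + 1)) : R) = 0 := by
    rw [Nat.choose_eq_zero_of_lt (by omega), Nat.cast_zero]
  simp only [pascal, add_mul, sum_add_distrib]
  rw [sum_range_succ (fun j => ((s + t + 1).choose (s + 1 + j) : R) * z ^ j), top, zero_mul,
    add_zero, sum_range_succ', mul_sum]
  have shift : ∀ j ∈ range (t + 1), ((s + t + 1).choose (s + (j + 1)) : R) * z ^ (j + 1) =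
      z * (((s + t + 1).choose (s + 1 + j) : R) * z ^ j) := fun j _ => by
    rw [show s + (j + 1) = s + 1 + j by omega, pow_succ]
    ring
  rw [sum_congr rfl shift, add_zero, pow_zero, mul_one]
  ring

lemma sum_range_choose_sub_mul_pow_succ (x : R) (s t : ℕ) :
    ∑ i ∈ range (t + 2), ((s + (t + 1) - i).choose s : R) * x ^ i =
      x * ∑ i ∈ range (t + 1), ((s + t - i).choose s : R) * x ^ i + ((s + t + 1).choose s : R) := by
  rw [sum_range_succ', mul_sum]
  simp only [pow_succ, Nat.sub_zero, pow_zero, mul_one]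
  congr 1
  refine sum_congr rfl fun i _ => ?_
  rw [show s + (t + 1) - (i + 1) = s + t - i by omega]
  ring

lemma sum_range_choose_mul_sub_one_pow (x : R) (s t : ℕ) :
    ∑ j ∈ range (t + 1), ((s + t + 1).choose (s + 1 + j) : R) * (x - 1) ^ j =
      ∑ i ∈ range (t + 1), ((s + t - i).choose s : R) * x ^ i := by
  induction t with
  | zero => simp
  | succ t ih =>
    rw [sum_range_choose_mul_pow_succ, sum_range_choose_sub_mul_pow_succ, ih, sub_add_cancel]

lemma sum_range_succ_eq_add_sum_Icc {β : Type*} [AddCommMonoid β] (f : ℕ → β) (t : ℕ) :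
    ∑ i ∈ range (t + 1), f i = f 0 + ∑ i ∈ Icc 1 t, f i := by
  rw [Nat.range_succ_eq_Icc_zero, ← insert_Icc_add_one_left_eq_Icc (Nat.zero_le t),
    sum_insert (by simp), zero_add]

lemma sum_range_choose_mul_sub_one_pow_eq_add_sum_Icc (x : R) {n s t : ℕ} (h : n = s + t + 1) :
    ∑ j ∈ range (t + 1), (n.choose (s + 1 + j) : R) * (x - 1) ^ j =
      ((n - 1).choose s : R) + ∑ i ∈ Icc 1 t, ((n - i - 1).choose s : R) * x ^ i := by
  subst h
  rw [sum_range_choose_mul_sub_one_pow, sum_range_succ_eq_add_sum_Icc]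
  refine congrArg₂ (· + ·) (by simp) (sum_congr rfl fun i _ => ?_)
  rw [show s + t + 1 - i - 1 = s + t - i by omega]

lemma sum_range_choose_mul_pow_sub_min_add_choose (a b : R) {r n : ℕ} (hr : r ≤ n) :
    ∑ k ∈ range (n + 1), (n.choose k : R) * (a ^ (r - min k r) * b ^ (k - min k r)) +
        n.choose r =
      ∑ j ∈ range (r + 1), (n.choose (n - r + j) : R) * a ^ j +
        ∑ j ∈ range (n - r + 1), (n.choose (r + j) : R) * b ^ j := by
  rw [← sum_range_add_sum_Ico _ (by omega : r + 1 ≤ n + 1), sum_Ico_eq_sum_range,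
    ← sum_range_reflect, sum_range_succ' _ (n - r)]
  have low : ∀ j ∈ range (r + 1), (n.choose (r + 1 - 1 - j) : R) *
      (a ^ (r - min (r + 1 - 1 - j) r) * b ^ (r + 1 - 1 - j - min (r + 1 - 1 - j) r)) =
      (n.choose (n - r + j) : R) * a ^ j := fun j hj => by
    have hjr : j ≤ r := Nat.lt_succ_iff.mp (mem_range.mp hj)
    rw [Nat.choose_symm_of_eq_add (by omega : n = (r + 1 - 1 - j) + (n - r + j)),
      min_eq_left (by omega), show r - (r + 1 - 1 - j) = j by omega, Nat.sub_self, pow_zero,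
      mul_one]
  have high : ∀ j ∈ range (n + 1 - (r + 1)), (n.choose (r + 1 + j) : R) *
      (a ^ (r - min (r + 1 + j) r) * b ^ (r + 1 + j - min (r + 1 + j) r)) =
      (n.choose (r + (j + 1)) : R) * b ^ (j + 1) := fun j _ => by
    rw [min_eq_right (by omega), Nat.sub_self, pow_zero, one_mul, add_assoc,
      Nat.add_sub_cancel_left, add_comm 1 j]
  rw [sum_congr rfl low, sum_congr rfl high, show n + 1 - (r + 1) = n - r by omega, add_zero,
    pow_zero, mul_one]
  ring

lemma sum_range_choose_mul_sub_one_pow_sub_min (x y : R) {r n : ℕ} (h0 : 0 < r) (hrn : r < n) :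
    ∑ k ∈ range (n + 1), (n.choose k : R) * ((x - 1) ^ (r - min k r) * (y - 1) ^ (k - min k r)) =
      ∑ j ∈ Icc 1 (n - r), ((n - j - 1).choose (r - 1) : R) * y ^ j +
        ∑ i ∈ Icc 1 r, ((n - i - 1).choose (n - r - 1) : R) * x ^ i := by
  have split := sum_range_choose_mul_pow_sub_min_add_choose (x - 1) (y - 1) hrn.le
  have hx := sum_range_choose_mul_sub_one_pow_eq_add_sum_Icc x
    (n := n) (s := n - r - 1) (t := r) (by omega)
  have hy := sum_range_choose_mul_sub_one_pow_eq_add_sum_Icc y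
    (n := n) (s := r - 1) (t := n - r) (by omega)
  rw [show n - r - 1 + 1 = n - r by omega] at hx
  rw [show r - 1 + 1 = r by omega] at hy
  have pascal : ((n - 1).choose (n - r - 1) : R) + ((n - 1).choose (r - 1) : R) = n.choose r := by
    rw [Nat.choose_symm_of_eq_add (by omega : n - 1 = (n - r - 1) + r)]
    obtain ⟨m, rfl⟩ : ∃ m, n = m + 1 := ⟨n - 1, by omega⟩
    obtain ⟨p, rfl⟩ : ∃ p, r = p + 1 := ⟨r - 1, by omega⟩
    rw [Nat.choose_succ_succ', Nat.add_sub_cancel, Nat.add_sub_cancel, Nat.cast_add, add_comm]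
  linear_combination split + hx + hy + pascal

end Binomial

section Uniform

variable {M : Matroid α} {r : ℕ}

lemma rk_eq_min_ncard (hunif : ∀ I, M.Indep I ↔ I ⊆ M.E ∧ I.ncard ≤ r) {A : Set α}
    (hA : A ⊆ M.E) (hfin : A.Finite) : rk M A = min A.ncard r := by
  have hsizes : {m | ∃ I, M.Indep I ∧ I ⊆ A ∧ I.ncard = m} = Set.Iic (min A.ncard r) := by
    ext m
    simp only [Set.mem_ofPred_eq, Set.mem_Iic, le_min_iff]
    constructor
    · rintro ⟨I, hI, hIA, rfl⟩
      exact ⟨Set.ncard_le_ncard hIA hfin, ((hunif I).1 hI).2⟩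
    · rintro ⟨hmA, hmr⟩
      obtain ⟨I, hIA, rfl⟩ := Set.exists_subset_card_eq hmA
      exact ⟨I, (hunif I).2 ⟨hIA.trans hA, hmr⟩, hIA, rfl⟩
  rw [rk, hsizes, csSup_Iic]

lemma tutte_eq_sum_range_of_indep_iff (hunif : ∀ I, M.Indep I ↔ I ⊆ M.E ∧ I.ncard ≤ r)
    (hE : M.E.Finite) (hr : r ≤ M.E.ncard) :
    tutte M = ∑ k ∈ range (M.E.ncard + 1), (M.E.ncard.choose k : MvPolynomial (Fin 2) ℤ) *
      ((X 0 - 1) ^ (r - min k r) * (X 1 - 1) ^ (k - min k r)) := by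
  have hrkE : rk M M.E = r := by
    rw [rk_eq_min_ncard hunif subset_rfl hE, min_eq_right hr]
  have hrkA : ∀ A ∈ hE.toFinset.powerset, rk M (A : Set α) = min A.card r := fun A hA => by
    have hAE : (A : Set α) ⊆ M.E := fun e he => hE.mem_toFinset.1 (mem_powerset.1 hA he)
    rw [rk_eq_min_ncard hunif hAE A.finite_toSet, Set.ncard_coe_finset]
  rw [tutte, dif_pos hE, sum_congr rfl fun A hA => by rw [hrkA A hA, hrkE],
    sum_powerset_apply_card
      (fun k => (X 0 - 1 : MvPolynomial (Fin 2) ℤ) ^ (r - min k r) * (X 1 - 1) ^ (k - min k r)),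
    ← Set.ncard_eq_toFinset_card _ hE]
  simp only [nsmul_eq_mul]

end Uniform

theorem tutte_uniform'_general (M : Matroid α) (r n : ℕ) (h0 : 0 < r) (hrn : r < n)
    (hn : M.E.ncard = n) (hunif : ∀ I, M.Indep I ↔ I ⊆ M.E ∧ I.ncard ≤ r) :
    tutte M =
      (∑ j ∈ Icc 1 (n - r), ((n - j - 1).choose (r - 1) : MvPolynomial (Fin 2) ℤ) * X 1 ^ j)
      + ∑ i ∈ Icc 1 r, ((n - i - 1).choose (n - r - 1) : MvPolynomial (Fin 2) ℤ) * X 0 ^ i := by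
  have hE : M.E.Finite := Set.finite_of_ncard_pos (by omega)
  rw [tutte_eq_sum_range_of_indep_iff hunif hE (by omega), hn,
    sum_range_choose_mul_sub_one_pow_sub_min _ _ h0 hrn]

/-- the Tutte polynomial of the uniform matroid `U_{r,n}` for `0 < r < n`,
written in terms of its coefficients. -/
theorem tutte_uniform' (M : Matroid α) (hE : M.E.Finite) (r n : ℕ) (h0 : 0 < r) (hrn : r < n)
    (hn : M.E.ncard = n) (hunif : ∀ I, M.Indep I ↔ I ⊆ M.E ∧ I.ncard ≤ r) :
    tutte M =
      (∑ j ∈ Icc 1 (n - r), ((n - j - 1).choose (r - 1) : MvPolynomial (Fin 2) ℤ) * X 1 ^ j)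
      + ∑ i ∈ Icc 1 r, ((n - i - 1).choose (n - r - 1) : MvPolynomial (Fin 2) ℤ) * X 0 ^ i :=
  tutte_uniform'_general M r n h0 hrn hn hunif

end TuttePaper
end
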